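/- Let v and w be words with v > w lexicographically, and let i be the least index (zero-based) with v_i ≠ w_i (so v_i > w_i). If B̂(v) < B̂(w), then B̂(w) < B̂(σ^{i+1} w). Likewise, if B̂(v) ≤ B̂(w), then B̂(w) ≤ B̂(σ^{i+1} w). -/

import Mathlib

/-- The shift map iterated `k` times: `(shift k w) i = w (i + k)`,
so `shift k w = w_k w_{k+1} w_{k+2} …`. -/
def shift (k : ℕ) (w : ℕ → ℕ) : ℕ → ℕ := fun i => w (i + k)

/-- Strict lexicographic order on infinite words: `v < w` iff there is an index `i`
with `v j = w j` for all `j < i` and `v i < w i`. -/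
def LexLt (v w : ℕ → ℕ) : Prop := ∃ i, (∀ j < i, v j = w j) ∧ v i < w i

/-- Weak lexicographic order: `v ≤ w` iff `v < w` or `v = w`. -/
def LexLe (v w : ℕ → ℕ) : Prop := LexLt v w ∨ v = w

/-- A word is a bounded sequence of natural numbers. -/
def IsWord (w : ℕ → ℕ) : Prop := ∃ M, ∀ i, w i ≤ M

/-- `fword w β = ∑_{i ≥ 0} w_i β^{-(i+1)} = w_0/β + w_1/β² + …`. -/
noncomputable def fword (w : ℕ → ℕ) (β : ℝ) : ℝ := ∑' i : ℕ, (w i : ℝ) / β ^ (i + 1)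

open Classical in
/-- `B̂(w)`: zero for the zero word, and otherwise `inf {β > 1 : f_w(β) ≤ 1}`. -/
noncomputable def Bhat (w : ℕ → ℕ) : ℝ :=
  if w = fun _ => 0 then 0 else sInf {β : ℝ | 1 < β ∧ fword w β ≤ 1}

/-- `B̄(w) = sup_{j ≥ 0} B̂(σ^j w)`. -/
noncomputable def Bbar (w : ℕ → ℕ) : ℝ := ⨆ j : ℕ, Bhat (shift j w)

/-- The sequence `A_i` in the β-expansion of `β`: `A_0 = β`, `A_{i+1} = β (A_i - ⌊A_i⌋)`. -/
noncomputable def betaA (β : ℝ) : ℕ → ℝ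
  | 0 => β
  | i + 1 => β * (betaA β i - (⌊betaA β i⌋₊ : ℝ))

/-- The β-expansion of `β`: the word `a` with `a_i = ⌊A_i⌋`. -/
noncomputable def betaExp (β : ℝ) : ℕ → ℕ := fun i => ⌊betaA β i⌋₊

/-- The domain `W(β)` of the β-shift: all words `w` with `σ^k w < a` lexicographically
for every `k ≥ 0`, where `a` is the β-expansion of `β`. -/
def Wset (β : ℝ) : Set (ℕ → ℕ) :=
  {w | IsWord w ∧ ∀ k : ℕ, LexLt (shift k w) (betaExp β)}

/-- `π` is a permutation of `{1, …, n}` (viewed as a map `ℕ → ℕ`). -/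
def IsPerm (n : ℕ) (π : ℕ → ℕ) : Prop := Set.BijOn π (Set.Icc 1 n) (Set.Icc 1 n)

/-- The word `w` induces the permutation `π` of `{1, …, n}`: for all `1 ≤ i, j ≤ n`,
`π(i) < π(j)` iff `σ^{i-1} w < σ^{j-1} w` lexicographically. -/
def Induces (n : ℕ) (w : ℕ → ℕ) (π : ℕ → ℕ) : Prop :=
  ∀ i ∈ Set.Icc 1 n, ∀ j ∈ Set.Icc 1 n,
    (π i < π j ↔ LexLt (shift (i - 1) w) (shift (j - 1) w))

/-- `π ∈ Al(Σ_β)`: some word in `W(β)` induces `π`. -/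
def Allowed (β : ℝ) (n : ℕ) (π : ℕ → ℕ) : Prop := ∃ w ∈ Wset β, Induces n w π

/-- The shift-complexity `B(π) = inf {β > 1 : π ∈ Al(Σ_β)}`. -/
noncomputable def Bperm (n : ℕ) (π : ℕ → ℕ) : ℝ :=
  sInf {β : ℝ | 1 < β ∧ Allowed β n π}

/-- `ρ_m` is the permutation `1 m 2 (m-1) 3 (m-2) …` of `{1, …, m}`:
`ρ(2i-1) = i` and `ρ(2i) = m+1-i`. -/
def IsRho (m : ℕ) (ρ : ℕ → ℕ) : Prop :=
  IsPerm m ρ ∧ (∀ i, 1 ≤ i → 2 * i - 1 ≤ m → ρ (2 * i - 1) = i) ∧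
    (∀ i, 1 ≤ i → 2 * i ≤ m → ρ (2 * i) = m + 1 - i)

/-!
Put `β = B̂(w)` and `u = σ^{i+1} w`. For `x > 1` one has `B̂(u) ≤ x ↔ f_u(x) ≤ 1` and
`B̂(u) < x ↔ f_u(x) < 1`, since `f_u` is continuous and (for `u ≠ 0`) strictly decreasing on
`(1, ∞)`. Splitting the series after the letter `i`, where `v_i ≥ w_i + 1`, gives
`f_v(x) ≥ f_w(x) + (1 - f_u(x)) / x^{i+1}`. If `β > 1` then `f_w(β) = 1`, so `f_v(β) < 1`
(resp. `≤ 1`) forces `f_u(β) > 1` (resp. `≥ 1`), that is `B̂(u) > β` (resp. `≥ β`).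
When `B̂(v) < B̂(w)` automatically `β > 1`; in the remaining case `β ≤ 1` of the weak
statement it suffices that `u ≠ 0`, as `B̂ ≥ 1` on nonzero words.
-/

open Filter Topology Set

lemma hasSum_div_pow_succ (M : ℝ) {x : ℝ} (hx : 1 < x) :
    HasSum (fun i : ℕ => M / x ^ (i + 1)) (M / (x - 1)) := by
  have hx0 : 0 < x := one_pos.trans hx
  have h := (hasSum_geometric_of_lt_one (inv_nonneg.2 hx0.le) (inv_lt_one_of_one_lt₀ hx)).mul_left
    (M / x)
  have hterm : (fun i : ℕ => M / x ^ (i + 1)) = fun i => M / x * x⁻¹ ^ i := by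
    ext i
    rw [inv_pow, pow_succ]
    field_simp
  have hsum : M / (x - 1) = M / x * (1 - x⁻¹)⁻¹ := by
    field_simp
  rwa [hterm, hsum]

section fword

variable {w : ℕ → ℕ} {x : ℝ}

lemma IsWord.shift (hw : IsWord w) (k : ℕ) : IsWord (shift k w) :=
  let ⟨M, hM⟩ := hw
  ⟨M, fun i => hM (i + k)⟩

lemma div_pow_succ_le_of_le {M : ℕ} (hM : ∀ i, w i ≤ M) {b : ℝ} (hb : 0 < b) (hbx : b ≤ x)
    (i : ℕ) : (w i : ℝ) / x ^ (i + 1) ≤ M / b ^ (i + 1) :=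
  div_le_div₀ (Nat.cast_nonneg M) (by exact_mod_cast hM i) (by positivity)
    (pow_le_pow_left₀ hb.le hbx _)

lemma summable_fword (hw : IsWord w) (hx : 1 < x) :
    Summable fun i : ℕ => (w i : ℝ) / x ^ (i + 1) := by
  obtain ⟨M, hM⟩ := hw
  exact (hasSum_div_pow_succ M hx).summable.of_nonneg_of_le (fun i => by positivity)
    (div_pow_succ_le_of_le hM (one_pos.trans hx) le_rfl)

lemma fword_nonneg (w : ℕ → ℕ) (hx : 0 < x) : 0 ≤ fword w x :=
  tsum_nonneg fun i => by positivity

@[simp]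
lemma fword_zero (x : ℝ) : fword (fun _ => 0) x = 0 := by
  simp [fword]

lemma exists_fword_le_one (hw : IsWord w) : ∃ x : ℝ, 1 < x ∧ fword w x ≤ 1 := by
  obtain ⟨M, hM⟩ := hw
  have hx : (1 : ℝ) < M + 2 := by linarith [(Nat.cast_nonneg M : (0 : ℝ) ≤ M)]
  refine ⟨M + 2, hx, ?_⟩
  calc fword w (M + 2) ≤ M / (M + 2 - 1) :=
        hasSum_le (div_pow_succ_le_of_le hM (one_pos.trans hx) le_rfl)
          (summable_fword ⟨M, hM⟩ hx).hasSum (hasSum_div_pow_succ M hx)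
    _ ≤ 1 := by rw [div_le_one (by positivity)]; linarith

lemma one_div_pow_le_fword (hw : IsWord w) (hx : 1 < x) {m : ℕ} (hm : w m ≠ 0) :
    1 / x ^ (m + 1) ≤ fword w x := by
  have hx0 : 0 < x := one_pos.trans hx
  calc 1 / x ^ (m + 1) ≤ (w m : ℝ) / x ^ (m + 1) := by
        gcongr; exact_mod_cast Nat.one_le_iff_ne_zero.2 hm
    _ ≤ fword w x := (summable_fword hw hx).le_tsum m fun j _ => by positivity

lemma fword_strictAntiOn (hw : IsWord w) (hw0 : w ≠ fun _ => 0) :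
    StrictAntiOn (fword w) (Ioi 1) := by
  intro b hb y hy hby
  obtain ⟨m, hm⟩ := Function.ne_iff.1 hw0
  have hb0 : (0 : ℝ) < b := one_pos.trans hb
  refine Summable.tsum_lt_tsum (i := m) (fun i => ?_) ?_ (summable_fword hw hy)
    (summable_fword hw hb)
  · exact div_le_div_of_nonneg_left (Nat.cast_nonneg _) (by positivity)
      (pow_le_pow_left₀ hb0.le hby.le _)
  · exact div_lt_div_of_pos_left (by exact_mod_cast Nat.pos_of_ne_zero hm) (by positivity)
      (pow_lt_pow_left₀ hby hb0.le (Nat.succ_ne_zero m))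

lemma continuousAt_fword (hw : IsWord w) (hx : 1 < x) : ContinuousAt (fword w) x := by
  obtain ⟨M, hM⟩ := hw
  obtain ⟨b, hb, hbx⟩ := exists_between hx
  have hb0 : 0 < b := one_pos.trans hb
  have hcont : ContinuousOn (fword w) (Ici b) := by
    refine continuousOn_tsum (fun i => ?_) (hasSum_div_pow_succ M hb).summable
      fun i y (hy : b ≤ y) => ?_
    · exact continuousOn_const.div (continuousOn_pow _) fun y (hy : b ≤ y) =>
        (pow_pos (hb0.trans_le hy) _).ne'
    · rw [Real.norm_of_nonneg (by have := hb0.trans_le hy; positivity)]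
      exact div_pow_succ_le_of_le hM hb0 hy i
  exact hcont.continuousAt (Ici_mem_nhds hbx)

lemma fword_eq_sum_add (hw : IsWord w) (hx : 1 < x) (k : ℕ) :
    fword w x = ∑ j ∈ Finset.range k, (w j : ℝ) / x ^ (j + 1) + fword (shift k w) x / x ^ k := by
  rw [fword, ← (summable_fword hw hx).sum_add_tsum_nat_add k, fword, ← tsum_div_const]
  congr 1
  refine tsum_congr fun n => ?_
  rw [shift, div_div, ← pow_add, add_right_comm]

end fword

/-- `v` gains at least `1 / x^{i+1}` on `w` at the letter `i`, and loses at most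
`f_{σ^{i+1} w}(x) / x^{i+1}` on the letters after it. -/
lemma fword_add_le_fword {v w : ℕ → ℕ} (hv : IsWord v) (hw : IsWord w) {i : ℕ}
    (hagree : ∀ j < i, v j = w j) (hlt : w i < v i) {x : ℝ} (hx : 1 < x) :
    fword w x + (1 - fword (shift (i + 1) w) x) / x ^ (i + 1) ≤ fword v x := by
  have hx0 : 0 < x := one_pos.trans hx
  have hhead : ∑ j ∈ Finset.range (i + 1), (w j : ℝ) / x ^ (j + 1) + 1 / x ^ (i + 1)
      ≤ ∑ j ∈ Finset.range (i + 1), (v j : ℝ) / x ^ (j + 1) := by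
    rw [Finset.sum_range_succ, Finset.sum_range_succ,
      Finset.sum_congr rfl fun j hj => by rw [← hagree j (Finset.mem_range.1 hj)], add_assoc,
      ← add_div]
    gcongr
    exact_mod_cast hlt
  have htail : 0 ≤ fword (shift (i + 1) v) x / x ^ (i + 1) :=
    div_nonneg (fword_nonneg _ hx0) (by positivity)
  rw [fword_eq_sum_add hv hx (i + 1), fword_eq_sum_add hw hx (i + 1)]
  have : fword (shift (i + 1) w) x / x ^ (i + 1) + (1 - fword (shift (i + 1) w) x) / x ^ (i + 1)
      = 1 / x ^ (i + 1) := by ring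
  linarith

section Bhat

variable {w : ℕ → ℕ}

@[simp]
lemma Bhat_zero : Bhat (fun _ => 0) = 0 :=
  if_pos rfl

lemma Bhat_nonneg (w : ℕ → ℕ) : 0 ≤ Bhat w := by
  by_cases hw0 : w = fun _ => 0
  · rw [hw0, Bhat_zero]
  rw [Bhat, if_neg hw0]
  exact Real.sInf_nonneg fun x hx => zero_le_one.trans hx.1.le

lemma bddBelow_fword_le_one (w : ℕ → ℕ) : BddBelow {x : ℝ | 1 < x ∧ fword w x ≤ 1} :=
  ⟨1, fun _ hx => hx.1.le⟩

lemma one_le_Bhat (hw : IsWord w) (hw0 : w ≠ fun _ => 0) : 1 ≤ Bhat w := by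
  rw [Bhat, if_neg hw0]
  exact le_csInf (exists_fword_le_one hw) fun _ hx => hx.1.le

lemma Bhat_lt_iff (hw : IsWord w) {x : ℝ} (hx : 1 < x) : Bhat w < x ↔ fword w x < 1 := by
  by_cases hw0 : w = fun _ => 0
  · simp [hw0, one_pos.trans hx]
  rw [Bhat, if_neg hw0]
  constructor
  · intro h
    obtain ⟨b, ⟨hb, hfb⟩, hbx⟩ := exists_lt_of_csInf_lt (exists_fword_le_one hw) h
    exact (fword_strictAntiOn hw hw0 hb (hb.trans hbx) hbx).trans_le hfb
  · intro h
    have hnear : ∀ᶠ y in 𝓝[<] x, fword w y < 1 :=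
      (continuousAt_fword hw hx).eventually (gt_mem_nhds h) |>.filter_mono nhdsWithin_le_nhds
    obtain ⟨y, hfy, hy, hyx⟩ :=
      (hnear.and (Ioo_mem_nhdsLT hx : ∀ᶠ y in 𝓝[<] x, y ∈ Ioo 1 x)).exists
    exact (csInf_le (bddBelow_fword_le_one w) ⟨hy, hfy.le⟩).trans_lt hyx

lemma Bhat_le_iff (hw : IsWord w) {x : ℝ} (hx : 1 < x) : Bhat w ≤ x ↔ fword w x ≤ 1 := by
  constructor
  · intro h
    refine le_of_tendsto
      ((continuousAt_fword hw hx).tendsto.mono_left (nhdsWithin_le_nhds (s := Ioi x)))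
      (eventually_nhdsWithin_of_forall fun y (hy : x < y) => ?_)
    exact ((Bhat_lt_iff hw (hx.trans hy)).1 (h.trans_lt hy)).le
  · intro h
    by_cases hw0 : w = fun _ => 0
    · simp [hw0, (one_pos.trans hx).le]
    rw [Bhat, if_neg hw0]
    exact csInf_le (bddBelow_fword_le_one w) ⟨hx, h⟩

lemma one_le_fword_Bhat (hw : IsWord w) (hβ : 1 < Bhat w) : 1 ≤ fword w (Bhat w) :=
  not_lt.1 fun h => lt_irrefl _ ((Bhat_lt_iff hw hβ).2 h)

end Bhat

lemma one_sub_fword_shift_le {v w : ℕ → ℕ} (hv : IsWord v) (hw : IsWord w) {i : ℕ}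
    (hagree : ∀ j < i, v j = w j) (hlt : w i < v i) (hβ : 1 < Bhat w) :
    1 - fword (shift (i + 1) w) (Bhat w) ≤ (fword v (Bhat w) - 1) * Bhat w ^ (i + 1) := by
  have hpow : 0 < Bhat w ^ (i + 1) := pow_pos (one_pos.trans hβ) _
  have := fword_add_le_fword hv hw hagree hlt hβ
  rw [← div_le_iff₀ hpow]
  linarith [one_le_fword_Bhat hw hβ]

lemma exists_one_lt_pow_lt_two (n : ℕ) : ∃ x : ℝ, 1 < x ∧ x ^ n < 2 := by
  have h : ∀ᶠ x : ℝ in 𝓝[>] 1, x ^ n < 2 :=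
    ((continuous_pow n).tendsto' 1 1 (one_pow n)).eventually (gt_mem_nhds one_lt_two)
      |>.filter_mono nhdsWithin_le_nhds
  obtain ⟨x, hx2, hx⟩ := (h.and self_mem_nhdsWithin).exists
  exact ⟨x, hx, hx2⟩

/-- A nonzero `w` supported on `[0, i]` would force `f_v(x) ≥ 2 / x^{i+1} > 1` for `x > 1` close
to `1`, whereas `B̂(v) ≤ 1` gives `f_v(x) ≤ 1` for all `x > 1`. -/
lemma shift_succ_ne_zero_of_Bhat_le_one {v w : ℕ → ℕ} (hv : IsWord v) (hw : IsWord w) {i : ℕ}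
    (hagree : ∀ j < i, v j = w j) (hlt : w i < v i) (hw0 : w ≠ fun _ => 0) (hBv : Bhat v ≤ 1) :
    shift (i + 1) w ≠ fun _ => 0 := by
  intro hu
  obtain ⟨m, hm⟩ := Function.ne_iff.1 hw0
  have hmi : m ≤ i := by
    by_contra! him
    have : shift (i + 1) w (m - (i + 1)) = 0 := congrFun hu _
    rw [shift, Nat.sub_add_cancel him] at this
    exact hm this
  obtain ⟨x, hx, hx2⟩ := exists_one_lt_pow_lt_two (i + 1)
  have hpow : 0 < x ^ (i + 1) := by positivity
  have hfw : 1 / x ^ (i + 1) ≤ fword w x :=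
    (one_div_pow_le_fword hw hx hm).trans' <|
      one_div_le_one_div_of_le (by positivity) (pow_le_pow_right₀ hx.le (by omega))
  have hfv : fword v x ≤ 1 := (Bhat_le_iff hv hx).1 (hBv.trans hx.le)
  have hkey := fword_add_le_fword hv hw hagree hlt hx
  rw [hu, fword_zero, sub_zero] at hkey
  have : 2 / x ^ (i + 1) ≤ 1 := by rw [← one_add_one_eq_two, add_div]; linarith
  rw [div_le_one hpow] at this
  linarith

lemma LexLt.apply_lt_apply_of_ne {v w : ℕ → ℕ} (h : LexLt w v) {i : ℕ}
    (hagree : ∀ j < i, v j = w j) (hne : v i ≠ w i) : w i < v i := by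
  obtain ⟨k, hk, hkv⟩ := h
  rcases lt_trichotomy k i with hki | rfl | hik
  · exact absurd (hagree k hki).symm hkv.ne
  · exact hkv
  · exact absurd (hk i hik).symm hne

/-- Let `v > w` lexicographically and let `i` be the least (zero-based) index
with `v i ≠ w i`. If `B̂(v) < B̂(w)` then `B̂(w) < B̂(σ^{i+1} w)`; likewise, if
`B̂(v) ≤ B̂(w)` then `B̂(w) ≤ B̂(σ^{i+1} w)`. -/
theorem stmt_17 (v w : ℕ → ℕ) (hv : IsWord v) (hw : IsWord w)
    (hgt : LexLt w v) (i : ℕ) (hagree : ∀ j < i, v j = w j) (hne : v i ≠ w i) :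
    (Bhat v < Bhat w → Bhat w < Bhat (shift (i + 1) w)) ∧
      (Bhat v ≤ Bhat w → Bhat w ≤ Bhat (shift (i + 1) w)) := by
  have hlt : w i < v i := hgt.apply_lt_apply_of_ne hagree hne
  have hu : IsWord (shift (i + 1) w) := hw.shift (i + 1)
  constructor
  · intro h
    have hv0 : v ≠ fun _ => 0 := fun h0 => by simp [h0] at hlt
    have hβ : 1 < Bhat w := (one_le_Bhat hv hv0).trans_lt h
    have hfv := (Bhat_lt_iff hv hβ).1 h
    have := one_sub_fword_shift_le hv hw hagree hlt hβ
    rw [← not_le, Bhat_le_iff hu hβ]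
    nlinarith [pow_pos (one_pos.trans hβ) (i + 1)]
  · intro h
    rcases lt_or_ge 1 (Bhat w) with hβ | hβ
    · have hfv := (Bhat_le_iff hv hβ).1 h
      have := one_sub_fword_shift_le hv hw hagree hlt hβ
      rw [← not_lt, Bhat_lt_iff hu hβ]
      nlinarith [pow_pos (one_pos.trans hβ) (i + 1)]
    by_cases hw0 : w = fun _ => 0
    · subst hw0
      exact Bhat_zero ▸ Bhat_nonneg _
    exact hβ.trans (one_le_Bhat hu
      (shift_succ_ne_zero_of_Bhat_le_one hv hw hagree hlt hw0 (h.trans hβ)))
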